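/- Let x_k in R^N satisfy x_{k+1} = A1 x_k + B u_k for all k >= 0 with (Qperp)^T x_0 = 0, set z~_k = Q^T x_k and y_k = C x_k. For an integer l >= 1, define the stagewise output residual Delta_y(l) = y_l - ( C~ z~_l + sum over j = 1 to l-1 of ( G_{l-j} z~_j + H_{l-j} u_j ) ), where C~ = C Q, and for integers j >= 1, G_j = C Qperp ((Qperp)^T A1 Qperp)^{j-1} (Qperp)^T A1 Q and H_j = C Qperp ((Qperp)^T A1 Qperp)^{j-1} (Qperp)^T B. Then Delta_y(l) = G_l z~_0 + H_l u_0. -/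
import Mathlib


open Matrix Finset


lemma mulVec_sum' {m k : Type*} [Fintype k] {ι : Type*} (t : Finset ι)
    (A : Matrix m k ℝ) (f : ι → k → ℝ) :
    A *ᵥ (∑ j ∈ t, f j) = ∑ j ∈ t, A *ᵥ f j := by
  simp only [← Matrix.mulVecLin_apply]
  exact map_sum A.mulVecLin f t

/-- the stagewise output residual equals G_l z~_0 + H_l u_0. -/
theorem stmt_10 (N n p s : ℕ) (hN : 0 < N) (hn : 0 < n) (hp : 0 < p) (hs : 0 < s)
    (hnN : n < N)
    (Q : Matrix (Fin N) (Fin n) ℝ) (Qperp : Matrix (Fin N) (Fin (N - n)) ℝ)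
    (hQ : Qᵀ * Q = 1) (hQperp : Qperpᵀ * Qperp = 1) (hQQperp : Qᵀ * Qperp = 0)
    (hsum : Q * Qᵀ + Qperp * Qperpᵀ = 1)
    (A1 : Matrix (Fin N) (Fin N) ℝ) (B : Matrix (Fin N) (Fin p) ℝ)
    (C : Matrix (Fin s) (Fin N) ℝ)
    (u : ℕ → Fin p → ℝ)
    (Ct : Matrix (Fin s) (Fin n) ℝ) (hCt : Ct = C * Q)
    (G : ℕ → Matrix (Fin s) (Fin n) ℝ) (H : ℕ → Matrix (Fin s) (Fin p) ℝ)
    (hG : ∀ j, 1 ≤ j → G j =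
      C * Qperp * ((Qperpᵀ * A1 * Qperp) ^ (j - 1)) * (Qperpᵀ * A1 * Q))
    (hH : ∀ j, 1 ≤ j → H j =
      C * Qperp * ((Qperpᵀ * A1 * Qperp) ^ (j - 1)) * (Qperpᵀ * B))
    (x : ℕ → Fin N → ℝ)
    (hx : ∀ k, x (k + 1) = A1 *ᵥ x k + B *ᵥ u k)
    (hx0 : Qperpᵀ *ᵥ x 0 = 0)
    (z : ℕ → Fin n → ℝ) (hz : ∀ k, z k = Qᵀ *ᵥ x k)
    (y : ℕ → Fin s → ℝ) (hy : ∀ k, y k = C *ᵥ x k) :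
    ∀ l, 1 ≤ l →
      y l - (Ct *ᵥ z l
        + ∑ j ∈ Finset.Ico 1 l, (G (l - j) *ᵥ z j + H (l - j) *ᵥ u j))
      = G l *ᵥ z 0 + H l *ᵥ u 0 := by
  intro l hl
  set M := Qperpᵀ * A1 * Qperp with hM
  set A21 := Qperpᵀ * A1 * Q with hA21
  set B2 := Qperpᵀ * B with hB2
  -- decomposition of x k
  have hxdec : ∀ k, x k = Q *ᵥ z k + Qperp *ᵥ (Qperpᵀ *ᵥ x k) := by
    intro k
    have := congrArg (· *ᵥ x k) hsum
    simpa [Matrix.add_mulVec, Matrix.mulVec_mulVec, hz] using this.symm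
  -- closed form for Qperpᵀ x l
  have hw : ∀ l, Qperpᵀ *ᵥ x l
      = ∑ j ∈ Finset.range l, (M ^ (l - 1 - j)) *ᵥ (A21 *ᵥ z j + B2 *ᵥ u j) := by
    intro l
    induction l with
    | zero => simpa using hx0
    | succ l ih =>
      have step : Qperpᵀ *ᵥ x (l + 1)
          = M *ᵥ (Qperpᵀ *ᵥ x l) + (A21 *ᵥ z l + B2 *ᵥ u l) := by
        rw [hx l]
        conv_lhs => rw [Matrix.mulVec_add, hxdec l]
        simp [Matrix.mulVec_add, Matrix.mulVec_mulVec, hM, hA21, hB2,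
          Matrix.mul_assoc]
        abel
      rw [step, ih, Finset.sum_range_succ, mulVec_sum' _]
      congr 1
      · apply Finset.sum_congr rfl
        intro j hj
        have hjl : j < l := Finset.mem_range.mp hj
        have : l + 1 - 1 - j = (l - 1 - j) + 1 := by omega
        rw [Matrix.mulVec_mulVec, this, pow_succ']
      · simp
  -- full sum formula for y l
  have hfull : y l = Ct *ᵥ z l
      + ∑ j ∈ Finset.range l, (G (l - j) *ᵥ z j + H (l - j) *ᵥ u j) := by
    have : y l = Ct *ᵥ z l + (C * Qperp) *ᵥ (Qperpᵀ *ᵥ x l) := by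
      rw [hy l]
      conv_lhs => rw [hxdec l]
      simp [Matrix.mulVec_add, Matrix.mulVec_mulVec, hCt, Matrix.mul_assoc]
    rw [this, hw l, mulVec_sum' _]
    congr 1
    apply Finset.sum_congr rfl
    intro j hj
    have hjl : j < l := Finset.mem_range.mp hj
    have h1 : 1 ≤ l - j := by omega
    have h2 : l - j - 1 = l - 1 - j := by omega
    rw [hG _ h1, hH _ h1, h2, Matrix.mulVec_add]
    simp [Matrix.mulVec_add, Matrix.mulVec_mulVec, Matrix.mul_assoc, hA21, hB2, hM]
  -- split off the j = 0 term
  have hsplit : ∑ j ∈ Finset.range l, (G (l - j) *ᵥ z j + H (l - j) *ᵥ u j)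
      = (G l *ᵥ z 0 + H l *ᵥ u 0)
        + ∑ j ∈ Finset.Ico 1 l, (G (l - j) *ᵥ z j + H (l - j) *ᵥ u j) := by
    rw [Finset.range_eq_Ico, Finset.sum_eq_sum_Ico_succ_bot hl]
    simp
  rw [hfull, hsplit]
  abel
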